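/- arXiv:1111.4162 — 3 statements merged into one kernel-verified Lean document; each statement's English description precedes it below -/
import Mathlib

section
/- Let u¹, u² : ℝ² → M_n(ℝ) be continuous, let Ψ : ℝ² → M_n(ℝ) be continuously differentiable with Ψ(ξ) invertible for every ξ and solving the linear spectral problem for (u¹, u²), and let S : ℝ² → M_n(ℝ) be continuously differentiable. Then the gauge surface F^S := Ψ⁻¹·S·Ψ is differentiable with partial derivatives ∂₁F^S = Ψ⁻¹·(∂₁S + [S, u¹])·Ψ and ∂₂F^S = Ψ⁻¹·(∂₂S + [S, u²])·Ψ at every point of ℝ². -/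
open Matrix

attribute [local instance] Matrix.normedAddCommGroup Matrix.normedSpace

/-- Partial derivative in the first variable `ξ₁` of a matrix-valued map on `ℝ²`. -/
noncomputable def pd1 {n : ℕ} (f : ℝ × ℝ → Matrix (Fin n) (Fin n) ℝ) (p : ℝ × ℝ) :
    Matrix (Fin n) (Fin n) ℝ :=
  fderiv ℝ f p (1, 0)

/-- Partial derivative in the second variable `ξ₂` of a matrix-valued map on `ℝ²`. -/
noncomputable def pd2 {n : ℕ} (f : ℝ × ℝ → Matrix (Fin n) (Fin n) ℝ) (p : ℝ × ℝ) :
    Matrix (Fin n) (Fin n) ℝ :=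
  fderiv ℝ f p (0, 1)

/-
Differentiating `Ψ⁻¹ S Ψ` by the product rule, with `d(Ψ⁻¹) = -Ψ⁻¹ (dΨ) Ψ⁻¹`, gives
`Ψ⁻¹ (dS + [S, dΨ Ψ⁻¹]) Ψ`, and the linear spectral problem says precisely that the logarithmic
derivative `dΨ Ψ⁻¹` in direction `ξᵢ` is `uⁱ`.
-/

open scoped Ring

section BanachAlgebra

variable {𝕜 E 𝔸 : Type*} [NontriviallyNormedField 𝕜] [NormedAddCommGroup E] [NormedSpace 𝕜 E]
  [NormedRing 𝔸] [NormedAlgebra 𝕜 𝔸] [HasSummableGeomSeries 𝔸] {Ψ S : E → 𝔸} {p : E}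

theorem fderiv_inverse_mul_mul_apply (hΨ : DifferentiableAt 𝕜 Ψ p)
    (hS : DifferentiableAt 𝕜 S p) (hunit : IsUnit (Ψ p)) (v : E) :
    fderiv 𝕜 (fun q => (Ψ q)⁻¹ʳ * S q * Ψ q) p v =
      (Ψ p)⁻¹ʳ * (fderiv 𝕜 S p v + (S p * (fderiv 𝕜 Ψ p v * (Ψ p)⁻¹ʳ)
        - fderiv 𝕜 Ψ p v * (Ψ p)⁻¹ʳ * S p)) * Ψ p := by
  obtain ⟨w, hw⟩ := hunit
  have hinv : HasFDerivAt (fun q => (Ψ q)⁻¹ʳ)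
      ((-ContinuousLinearMap.mulLeftRight 𝕜 𝔸 ↑w⁻¹ ↑w⁻¹).comp (fderiv 𝕜 Ψ p)) p :=
    (hw ▸ hasFDerivAt_ringInverse w).comp p hΨ.hasFDerivAt
  rw [((hinv.fun_mul' hS.hasFDerivAt).fun_mul' hΨ.hasFDerivAt).fderiv, ← hw, Ring.inverse_unit]
  simp only [_root_.add_apply, _root_.smul_apply, smul_eq_mul, MulOpposite.smul_eq_mul_unop,
    MulOpposite.unop_op, ContinuousLinearMap.neg_comp, _root_.neg_apply,
    ContinuousLinearMap.comp_apply, ContinuousLinearMap.mulLeftRight_apply]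
  simp only [mul_add, mul_sub, add_mul, sub_mul, mul_assoc, Units.inv_mul, mul_one, neg_mul]
  abel

end BanachAlgebra

theorem map_ringInverse {F M₀ N₀ : Type*} [MonoidWithZero M₀] [MonoidWithZero N₀]
    [EquivLike F M₀ N₀] [MulEquivClass F M₀ N₀] (f : F) (x : M₀) : f x⁻¹ʳ = (f x)⁻¹ʳ := by
  by_cases hx : IsUnit x
  · obtain ⟨u, rfl⟩ := hx
    simpa using (Ring.inverse_unit (Units.map (f : M₀ →* N₀) u)).symm
  · rw [Ring.inverse_non_unit x hx, Ring.inverse_non_unit _ (by rwa [isUnit_map_iff]), map_zero]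

namespace Matrix

/-- The sup norm that `Matrix.normedAddCommGroup` puts on matrices is not an algebra norm, so the
analytic facts about products and inverses are transported along this linear homeomorphism, which
is also a ring isomorphism onto a Banach algebra. -/
noncomputable def toEuclideanCLE (𝕜 ι : Type*) [RCLike 𝕜] [Fintype ι] [DecidableEq ι] :
    Matrix ι ι 𝕜 ≃L[𝕜] (EuclideanSpace 𝕜 ι →L[𝕜] EuclideanSpace 𝕜 ι) :=
  (toEuclideanCLM (n := ι) (𝕜 := 𝕜)).toAlgEquiv.toLinearEquiv.toContinuousLinearEquiv

variable {𝕜 ι : Type*} [RCLike 𝕜] [Fintype ι] [DecidableEq ι]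

theorem toEuclideanCLE_apply (A : Matrix ι ι 𝕜) :
    toEuclideanCLE 𝕜 ι A = toEuclideanCLM (𝕜 := 𝕜) A :=
  rfl

theorem toEuclideanCLE_inv_mul_mul (A B : Matrix ι ι 𝕜) :
    toEuclideanCLE 𝕜 ι (A⁻¹ * B * A) =
      (toEuclideanCLE 𝕜 ι A)⁻¹ʳ * toEuclideanCLE 𝕜 ι B * toEuclideanCLE 𝕜 ι A := by
  simp only [toEuclideanCLE_apply, map_mul, nonsing_inv_eq_ringInverse, map_ringInverse]

theorem isUnit_toEuclideanCLE {A : Matrix ι ι 𝕜} (hA : IsUnit A) : IsUnit (toEuclideanCLE 𝕜 ι A) :=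
  hA.map (toEuclideanCLM (𝕜 := 𝕜) (n := ι))

variable {E : Type*} {Ψ S : E → Matrix ι ι 𝕜} {p : E}

theorem inv_mul_mul_eq_toEuclideanCLE_symm_comp :
    (fun q => (Ψ q)⁻¹ * S q * Ψ q) = (toEuclideanCLE 𝕜 ι).symm ∘ fun q =>
      (toEuclideanCLE 𝕜 ι (Ψ q))⁻¹ʳ * toEuclideanCLE 𝕜 ι (S q) * toEuclideanCLE 𝕜 ι (Ψ q) := by
  funext q
  rw [Function.comp_apply, ← toEuclideanCLE_inv_mul_mul, ContinuousLinearEquiv.symm_apply_apply]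

variable [NormedAddCommGroup E] [NormedSpace 𝕜 E]

theorem fderiv_toEuclideanCLE_comp_apply (f : E → Matrix ι ι 𝕜) (v : E) :
    fderiv 𝕜 (fun q => toEuclideanCLE 𝕜 ι (f q)) p v = toEuclideanCLE 𝕜 ι (fderiv 𝕜 f p v) :=
  congrArg (· v) (toEuclideanCLE 𝕜 ι).comp_fderiv

theorem differentiableAt_inv_mul_mul (hΨ : DifferentiableAt 𝕜 Ψ p)
    (hS : DifferentiableAt 𝕜 S p) (hunit : IsUnit (Ψ p)) :
    DifferentiableAt 𝕜 (fun q => (Ψ q)⁻¹ * S q * Ψ q) p := by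
  have hΨ' := (toEuclideanCLE 𝕜 ι).differentiableAt.comp p hΨ
  have hS' := (toEuclideanCLE 𝕜 ι).differentiableAt.comp p hS
  rw [inv_mul_mul_eq_toEuclideanCLE_symm_comp]
  exact (toEuclideanCLE 𝕜 ι).symm.differentiableAt.comp p
    (((hΨ'.inverse (isUnit_toEuclideanCLE hunit)).mul hS').mul hΨ')

theorem fderiv_inv_mul_mul_apply (hΨ : DifferentiableAt 𝕜 Ψ p)
    (hS : DifferentiableAt 𝕜 S p) (hunit : IsUnit (Ψ p)) (v : E) :
    fderiv 𝕜 (fun q => (Ψ q)⁻¹ * S q * Ψ q) p v =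
      (Ψ p)⁻¹ * (fderiv 𝕜 S p v + (S p * (fderiv 𝕜 Ψ p v * (Ψ p)⁻¹)
        - fderiv 𝕜 Ψ p v * (Ψ p)⁻¹ * S p)) * Ψ p := by
  have hΨ' : DifferentiableAt 𝕜 (fun q => toEuclideanCLE 𝕜 ι (Ψ q)) p :=
    (toEuclideanCLE 𝕜 ι).differentiableAt.comp p hΨ
  have hS' : DifferentiableAt 𝕜 (fun q => toEuclideanCLE 𝕜 ι (S q)) p :=
    (toEuclideanCLE 𝕜 ι).differentiableAt.comp p hS
  calc fderiv 𝕜 (fun q => (Ψ q)⁻¹ * S q * Ψ q) p v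
      = (toEuclideanCLE 𝕜 ι).symm (fderiv 𝕜 (fun q => (toEuclideanCLE 𝕜 ι (Ψ q))⁻¹ʳ *
          toEuclideanCLE 𝕜 ι (S q) * toEuclideanCLE 𝕜 ι (Ψ q)) p v) := by
        rw [inv_mul_mul_eq_toEuclideanCLE_symm_comp]
        exact congrArg (· v) (toEuclideanCLE 𝕜 ι).symm.comp_fderiv
    _ = (toEuclideanCLE 𝕜 ι).symm (toEuclideanCLE 𝕜 ι ((Ψ p)⁻¹ * (fderiv 𝕜 S p v +
          (S p * (fderiv 𝕜 Ψ p v * (Ψ p)⁻¹) - fderiv 𝕜 Ψ p v * (Ψ p)⁻¹ * S p)) * Ψ p)) := by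
        rw [fderiv_inverse_mul_mul_apply hΨ' hS' (isUnit_toEuclideanCLE hunit),
          fderiv_toEuclideanCLE_comp_apply, fderiv_toEuclideanCLE_comp_apply]
        simp only [toEuclideanCLE_apply, map_mul, map_add, map_sub, nonsing_inv_eq_ringInverse,
          map_ringInverse]
    _ = _ := (toEuclideanCLE 𝕜 ι).symm_apply_apply _

theorem fderiv_inv_mul_mul_apply_of_fderiv_eq_mul (hΨ : DifferentiableAt 𝕜 Ψ p)
    (hS : DifferentiableAt 𝕜 S p) (hunit : IsUnit (Ψ p)) {v : E} {U : Matrix ι ι 𝕜}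
    (hU : fderiv 𝕜 Ψ p v = U * Ψ p) :
    fderiv 𝕜 (fun q => (Ψ q)⁻¹ * S q * Ψ q) p v =
      (Ψ p)⁻¹ * (fderiv 𝕜 S p v + (S p * U - U * S p)) * Ψ p := by
  rw [fderiv_inv_mul_mul_apply hΨ hS hunit, hU,
    mul_nonsing_inv_cancel_right _ _ ((isUnit_iff_isUnit_det _).mp hunit)]

end Matrix

theorem gauge_surface_tangent_vectors_general {n : ℕ}
    (u1 u2 Ψ S : ℝ × ℝ → Matrix (Fin n) (Fin n) ℝ)
    (hΨ : ContDiff ℝ 1 Ψ)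
    (hΨinv : ∀ p : ℝ × ℝ, IsUnit (Ψ p))
    (hlsp1 : ∀ p : ℝ × ℝ, pd1 Ψ p = u1 p * Ψ p)
    (hlsp2 : ∀ p : ℝ × ℝ, pd2 Ψ p = u2 p * Ψ p)
    (hS : ContDiff ℝ 1 S)
    (FS : ℝ × ℝ → Matrix (Fin n) (Fin n) ℝ)
    (hFS : FS = fun p => (Ψ p)⁻¹ * S p * Ψ p) :
    (∀ p : ℝ × ℝ, DifferentiableAt ℝ FS p) ∧
    (∀ p : ℝ × ℝ,
      pd1 FS p = (Ψ p)⁻¹ * (pd1 S p + (S p * u1 p - u1 p * S p)) * Ψ p) ∧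
    (∀ p : ℝ × ℝ,
      pd2 FS p = (Ψ p)⁻¹ * (pd2 S p + (S p * u2 p - u2 p * S p)) * Ψ p) := by
  subst hFS
  have hΨd := hΨ.differentiable one_ne_zero
  have hSd := hS.differentiable one_ne_zero
  exact ⟨fun p => Matrix.differentiableAt_inv_mul_mul (hΨd p) (hSd p) (hΨinv p),
    fun p => Matrix.fderiv_inv_mul_mul_apply_of_fderiv_eq_mul (hΨd p) (hSd p) (hΨinv p) (hlsp1 p),
    fun p => Matrix.fderiv_inv_mul_mul_apply_of_fderiv_eq_mul (hΨd p) (hSd p) (hΨinv p) (hlsp2 p)⟩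

/-- the gauge surface `F^S := Ψ⁻¹·S·Ψ` is differentiable, with partial
derivatives `∂₁F^S = Ψ⁻¹·(∂₁S + [S, u¹])·Ψ` and `∂₂F^S = Ψ⁻¹·(∂₂S + [S, u²])·Ψ`. -/
theorem gauge_surface_tangent_vectors {n : ℕ} (hn : 1 ≤ n)
    (u1 u2 Ψ S : ℝ × ℝ → Matrix (Fin n) (Fin n) ℝ)
    (hu1 : Continuous u1) (hu2 : Continuous u2)
    (hΨ : ContDiff ℝ 1 Ψ)
    (hΨinv : ∀ p : ℝ × ℝ, IsUnit (Ψ p))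
    (hlsp1 : ∀ p : ℝ × ℝ, pd1 Ψ p = u1 p * Ψ p)
    (hlsp2 : ∀ p : ℝ × ℝ, pd2 Ψ p = u2 p * Ψ p)
    (hS : ContDiff ℝ 1 S)
    (FS : ℝ × ℝ → Matrix (Fin n) (Fin n) ℝ)
    (hFS : FS = fun p => (Ψ p)⁻¹ * S p * Ψ p) :
    (∀ p : ℝ × ℝ, DifferentiableAt ℝ FS p) ∧
    (∀ p : ℝ × ℝ,
      pd1 FS p = (Ψ p)⁻¹ * (pd1 S p + (S p * u1 p - u1 p * S p)) * Ψ p) ∧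
    (∀ p : ℝ × ℝ,
      pd2 FS p = (Ψ p)⁻¹ * (pd2 S p + (S p * u2 p - u2 p * S p)) * Ψ p) :=
  gauge_surface_tangent_vectors_general u1 u2 Ψ S hΨ hΨinv hlsp1 hlsp2 hS FS hFS
end

section
/- Let u¹, u² : ℝ² → M_n(ℝ) be continuously differentiable and satisfy the zero-curvature condition ∂₂u¹ − ∂₁u² + [u¹, u²] = 0 everywhere, let Ψ : ℝ² → M_n(ℝ) be twice continuously differentiable with Ψ(ξ) invertible for every ξ and solving the linear spectral problem for (u¹, u²), and let r : ℝ → ℝ be continuously differentiable. Then the surface F^r := r(ξ₁)·Ψ⁻¹·(∂₁Ψ) has partial derivatives ∂₁F^r = Ψ⁻¹·∂₁(r(ξ₁)u¹)·Ψ and ∂₂F^r = r(ξ₁)·Ψ⁻¹·(∂₁u²)·Ψ at every point of ℝ². In particular, for r ≡ 1, F¹ := Ψ⁻¹∂₁Ψ satisfies ∂₁F¹ = Ψ⁻¹(∂₁u¹)Ψ and ∂₂F¹ = Ψ⁻¹(∂₁u²)Ψ. -/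
/-! Since `∂₁Ψ = u¹Ψ`, the surface is a gauge transform: `F^r = Ψ⁻¹ (r u¹) Ψ`. Differentiating
`Ψ⁻¹ A Ψ` in a direction along which `∂Ψ = U Ψ` gives `Ψ⁻¹ (∂A + [A, U]) Ψ`. In the `ξ₁`-direction
the commutator `[r u¹, u¹]` vanishes; in the `ξ₂`-direction `r(ξ₁)` is constant and the
zero-curvature condition turns `∂₂u¹ + [u¹, u²]` into `∂₁u²`. -/

open Matrix

attribute [local instance] Matrix.normedAddCommGroup Matrix.normedSpace

theorem map_ringInverse_s9 {F R S : Type*} [Semiring R] [Semiring S] [EquivLike F R S]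
    [RingEquivClass F R S] (f : F) (a : R) : f (Ring.inverse a) = Ring.inverse (f a) := by
  by_cases ha : IsUnit a
  · have hfa : IsUnit (f a) := ha.map f
    rw [← Ring.inverse_mul_cancel_left (f a) (f (Ring.inverse a)) hfa, ← map_mul,
      Ring.mul_inverse_cancel a ha, map_one, mul_one]
  · rw [Ring.inverse_non_unit a ha, Ring.inverse_non_unit _ (by rwa [isUnit_map_iff]), map_zero]

theorem Matrix.nonsing_inv_mul_mul_nonsing_inv {m R : Type*} [Fintype m] [DecidableEq m]
    [CommRing R] (A : Matrix m m R) : A⁻¹ * A * A⁻¹ = A⁻¹ := by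
  by_cases hA : IsUnit A.det
  · rw [Matrix.nonsing_inv_mul A hA, one_mul]
  · simp [Matrix.nonsing_inv_apply_not_isUnit A hA]

noncomputable def Matrix.mulCLM (m 𝕜 : Type*) [Fintype m] [RCLike 𝕜] :
    Matrix m m 𝕜 →L[𝕜] Matrix m m 𝕜 →L[𝕜] Matrix m m 𝕜 :=
  LinearMap.toContinuousLinearMap
    (LinearMap.toContinuousLinearMap.toLinearMap ∘ₗ LinearMap.mul 𝕜 (Matrix m m 𝕜))

section
variable {m 𝕜 : Type*} [Fintype m] [RCLike 𝕜]

theorem Matrix.differentiableAt_inv [DecidableEq m] {A : Matrix m m 𝕜} (hA : IsUnit A) :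
    DifferentiableAt 𝕜 (fun B : Matrix m m 𝕜 => B⁻¹) A := by
  -- The entrywise sup norm is not submultiplicative, so `Ring.inverse` is differentiated in the
  -- Banach algebra of operators on Euclidean space instead.
  let φ := Matrix.toEuclideanCLM (n := m) (𝕜 := 𝕜)
  let e := (φ.toAlgEquiv.toLinearEquiv).toContinuousLinearEquiv
  have he : (fun B : Matrix m m 𝕜 => B⁻¹) = fun B => e.symm (Ring.inverse (e B)) := by
    funext B
    apply e.injective
    simp [e, Matrix.nonsing_inv_eq_ringInverse, ← map_ringInverse_s9 φ]
  rw [he]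
  exact e.symm.differentiableAt.comp A
    ((differentiableAt_inverse (hA.map φ)).comp A e.differentiableAt)

variable {E : Type*} [NormedAddCommGroup E] [NormedSpace 𝕜 E] {f g : E → Matrix m m 𝕜}
  {x : E}

theorem DifferentiableAt.matrix_mul (hf : DifferentiableAt 𝕜 f x)
    (hg : DifferentiableAt 𝕜 g x) :
    DifferentiableAt 𝕜 (fun y => f y * g y) x :=
  ((Matrix.mulCLM m 𝕜).hasFDerivAt_of_bilinear hf.hasFDerivAt hg.hasFDerivAt).differentiableAt

theorem fderiv_matrix_mul (hf : DifferentiableAt 𝕜 f x) (hg : DifferentiableAt 𝕜 g x)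
    (v : E) :
    fderiv 𝕜 (fun y => f y * g y) x v = fderiv 𝕜 f x v * g x + f x * fderiv 𝕜 g x v := by
  have h :=
    ((Matrix.mulCLM m 𝕜).hasFDerivAt_of_bilinear hf.hasFDerivAt hg.hasFDerivAt).fderiv
  exact (congrArg (fun L => L v) h).trans (add_comm _ _)

theorem DifferentiableAt.matrix_inv [DecidableEq m] (hf : DifferentiableAt 𝕜 f x)
    (hx : IsUnit (f x)) : DifferentiableAt 𝕜 (fun y => (f y)⁻¹) x :=
  (Matrix.differentiableAt_inv hx).comp x hf

theorem fderiv_matrix_inv [DecidableEq m] (hf : DifferentiableAt 𝕜 f x) (hx : IsUnit (f x))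
    (v : E) :
    fderiv 𝕜 (fun y => (f y)⁻¹) x v = -((f x)⁻¹ * fderiv 𝕜 f x v * (f x)⁻¹) := by
  have hdet : IsUnit (f x).det := (Matrix.isUnit_iff_isUnit_det _).mp hx
  have hinv := hf.matrix_inv hx
  -- `A⁻¹ * A * A⁻¹ = A⁻¹` holds for every matrix, so it can be differentiated at `x`
  have h := congrArg (fun φ => fderiv 𝕜 φ x v)
    (funext fun y => Matrix.nonsing_inv_mul_mul_nonsing_inv (f y))
  rw [fderiv_matrix_mul (hinv.matrix_mul hf) hinv, fderiv_matrix_mul hinv hf, add_mul,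
    mul_assoc _ (f x), Matrix.mul_nonsing_inv _ hdet, mul_one,
    Matrix.nonsing_inv_mul _ hdet, one_mul] at h
  linear_combination (norm := abel) h

theorem fderiv_conj_of_fderiv_eq_mul [DecidableEq m] {Ψ A : E → Matrix m m 𝕜} {U : Matrix m m 𝕜}
    {v : E} (hΨ : DifferentiableAt 𝕜 Ψ x) (hΨx : IsUnit (Ψ x)) (hA : DifferentiableAt 𝕜 A x)
    (hΨv : fderiv 𝕜 Ψ x v = U * Ψ x) :
    fderiv 𝕜 (fun y => (Ψ y)⁻¹ * A y * Ψ y) x v =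
      (Ψ x)⁻¹ * (fderiv 𝕜 A x v + (A x * U - U * A x)) * Ψ x := by
  have hinv := hΨ.matrix_inv hΨx
  have hΨΨinv : Ψ x * (Ψ x)⁻¹ = 1 :=
    Matrix.mul_nonsing_inv _ ((Matrix.isUnit_iff_isUnit_det _).mp hΨx)
  rw [fderiv_matrix_mul (hinv.matrix_mul hA) hΨ, fderiv_matrix_mul hinv hA,
    fderiv_matrix_inv hΨ hΨx, hΨv,
    show (Ψ x)⁻¹ * (U * Ψ x) * (Ψ x)⁻¹ = (Ψ x)⁻¹ * U by
      rw [mul_assoc, mul_assoc, hΨΨinv, mul_one]]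
  noncomm_ring

end

noncomputable def surfaceF {n : ℕ} (r : ℝ → ℝ) (Ψ : ℝ × ℝ → Matrix (Fin n) (Fin n) ℝ) :
    ℝ × ℝ → Matrix (Fin n) (Fin n) ℝ :=
  fun q => r q.1 • ((Ψ q)⁻¹ * pd1 Ψ q)

theorem pd2_fst_smul {n : ℕ} {r : ℝ → ℝ} {f : ℝ × ℝ → Matrix (Fin n) (Fin n) ℝ} {p : ℝ × ℝ}
    (hr : DifferentiableAt ℝ r p.1) (hf : DifferentiableAt ℝ f p) :
    pd2 (fun q => r q.1 • f q) p = r p.1 • pd2 f p := by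
  have hrfst : HasFDerivAt (fun q : ℝ × ℝ => r q.1)
      ((fderiv ℝ r p.1).comp (ContinuousLinearMap.fst ℝ ℝ ℝ)) p :=
    hr.hasFDerivAt.comp p hasFDerivAt_fst
  refine (congrArg (· (0, 1)) (hrfst.fun_smul hf.hasFDerivAt).fderiv).trans ?_
  simp only [_root_.add_apply, ContinuousLinearMap.smulRight_apply,
    ContinuousLinearMap.comp_apply, ContinuousLinearMap.coe_fst', map_zero, zero_smul, add_zero]
  rfl

section
variable {n : ℕ} {u1 u2 Ψ : ℝ × ℝ → Matrix (Fin n) (Fin n) ℝ} {r : ℝ → ℝ}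

theorem surfaceF_eq_conj (hlsp1 : ∀ p, pd1 Ψ p = u1 p * Ψ p) :
    surfaceF r Ψ = fun q => (Ψ q)⁻¹ * (r q.1 • u1 q) * Ψ q := by
  funext q
  rw [surfaceF, hlsp1, Matrix.mul_smul, Matrix.smul_mul, mul_assoc]

theorem pd1_surfaceF (hu1 : Differentiable ℝ u1) (hΨ : Differentiable ℝ Ψ)
    (hΨinv : ∀ p, IsUnit (Ψ p)) (hr : Differentiable ℝ r) (hlsp1 : ∀ p, pd1 Ψ p = u1 p * Ψ p)
    (p : ℝ × ℝ) :
    pd1 (surfaceF r Ψ) p = (Ψ p)⁻¹ * pd1 (fun q => r q.1 • u1 q) p * Ψ p := by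
  have hA : DifferentiableAt ℝ (fun q => r q.1 • u1 q) p := by fun_prop
  rw [surfaceF_eq_conj hlsp1, pd1,
    fderiv_conj_of_fderiv_eq_mul (hΨ p) (hΨinv p) hA (hlsp1 p), smul_mul_assoc, mul_smul_comm,
    sub_self, add_zero, pd1]

theorem pd2_surfaceF (hu1 : Differentiable ℝ u1) (hΨ : Differentiable ℝ Ψ)
    (hΨinv : ∀ p, IsUnit (Ψ p)) (hr : Differentiable ℝ r)
    (hzcc : ∀ p, pd2 u1 p - pd1 u2 p + (u1 p * u2 p - u2 p * u1 p) = 0)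
    (hlsp1 : ∀ p, pd1 Ψ p = u1 p * Ψ p) (hlsp2 : ∀ p, pd2 Ψ p = u2 p * Ψ p) (p : ℝ × ℝ) :
    pd2 (surfaceF r Ψ) p = r p.1 • ((Ψ p)⁻¹ * pd1 u2 p * Ψ p) := by
  have hA : DifferentiableAt ℝ (fun q => r q.1 • u1 q) p := by fun_prop
  have hzcc' : pd2 u1 p + (u1 p * u2 p - u2 p * u1 p) = pd1 u2 p := by
    rw [← sub_eq_zero, ← hzcc p]; abel
  have hconj := fderiv_conj_of_fderiv_eq_mul (hΨ p) (hΨinv p) hA (hlsp2 p)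
  rw [surfaceF_eq_conj hlsp1, pd2, hconj, ← pd2, pd2_fst_smul (hr _) (hu1 p), smul_mul_assoc,
    mul_smul_comm, ← smul_sub, ← smul_add, hzcc', Matrix.mul_smul, Matrix.smul_mul]

end

theorem surface_Fr_tangent_vectors_general {n : ℕ}
    (u1 u2 Ψ : ℝ × ℝ → Matrix (Fin n) (Fin n) ℝ)
    (hu1 : ContDiff ℝ 1 u1)
    (hzcc : ∀ p : ℝ × ℝ, pd2 u1 p - pd1 u2 p + (u1 p * u2 p - u2 p * u1 p) = 0)
    (hΨ : ContDiff ℝ 2 Ψ)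
    (hΨinv : ∀ p : ℝ × ℝ, IsUnit (Ψ p))
    (hlsp1 : ∀ p : ℝ × ℝ, pd1 Ψ p = u1 p * Ψ p)
    (hlsp2 : ∀ p : ℝ × ℝ, pd2 Ψ p = u2 p * Ψ p)
    (r : ℝ → ℝ) (hr : ContDiff ℝ 1 r)
    (Fr : ℝ × ℝ → Matrix (Fin n) (Fin n) ℝ)
    (hFr : Fr = fun p => r p.1 • ((Ψ p)⁻¹ * pd1 Ψ p)) :
    ((∀ p : ℝ × ℝ,
        pd1 Fr p = (Ψ p)⁻¹ * pd1 (fun q => r q.1 • u1 q) p * Ψ p) ∧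
     (∀ p : ℝ × ℝ,
        pd2 Fr p = r p.1 • ((Ψ p)⁻¹ * pd1 u2 p * Ψ p))) ∧
    ((∀ p : ℝ × ℝ,
        pd1 (fun q => (Ψ q)⁻¹ * pd1 Ψ q) p = (Ψ p)⁻¹ * pd1 u1 p * Ψ p) ∧
     (∀ p : ℝ × ℝ,
        pd2 (fun q => (Ψ q)⁻¹ * pd1 Ψ q) p = (Ψ p)⁻¹ * pd1 u2 p * Ψ p)) := by
  have du1 : Differentiable ℝ u1 := hu1.differentiable one_ne_zero
  have dΨ : Differentiable ℝ Ψ := hΨ.differentiable two_ne_zero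
  have dr : Differentiable ℝ r := hr.differentiable one_ne_zero
  have hF1 : (fun q => (Ψ q)⁻¹ * pd1 Ψ q) = surfaceF (fun _ => 1) Ψ := by
    funext q; rw [surfaceF, one_smul]
  subst hFr
  refine ⟨⟨pd1_surfaceF du1 dΨ hΨinv dr hlsp1, pd2_surfaceF du1 dΨ hΨinv dr hzcc hlsp1 hlsp2⟩,
    ?_, ?_⟩
  · simpa [hF1] using pd1_surfaceF du1 dΨ hΨinv (differentiable_const 1) hlsp1
  · simpa [hF1] using pd2_surfaceF du1 dΨ hΨinv (differentiable_const 1) hzcc hlsp1 hlsp2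

/-- for `(u¹, u²)` satisfying the ZCC, `Ψ` solving the LSP, and `r : ℝ → ℝ`
continuously differentiable, the surface `F^r := r(ξ₁)·Ψ⁻¹·(∂₁Ψ)` has partial derivatives
`∂₁F^r = Ψ⁻¹·∂₁(r(ξ₁)u¹)·Ψ` and `∂₂F^r = r(ξ₁)·Ψ⁻¹·(∂₁u²)·Ψ`.  In particular for `r ≡ 1`,
`F¹ := Ψ⁻¹·∂₁Ψ` satisfies `∂₁F¹ = Ψ⁻¹(∂₁u¹)Ψ` and `∂₂F¹ = Ψ⁻¹(∂₁u²)Ψ`. -/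
theorem surface_Fr_tangent_vectors {n : ℕ} (hn : 1 ≤ n)
    (u1 u2 Ψ : ℝ × ℝ → Matrix (Fin n) (Fin n) ℝ)
    (hu1 : ContDiff ℝ 1 u1) (hu2 : ContDiff ℝ 1 u2)
    (hzcc : ∀ p : ℝ × ℝ, pd2 u1 p - pd1 u2 p + (u1 p * u2 p - u2 p * u1 p) = 0)
    (hΨ : ContDiff ℝ 2 Ψ)
    (hΨinv : ∀ p : ℝ × ℝ, IsUnit (Ψ p))
    (hlsp1 : ∀ p : ℝ × ℝ, pd1 Ψ p = u1 p * Ψ p)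
    (hlsp2 : ∀ p : ℝ × ℝ, pd2 Ψ p = u2 p * Ψ p)
    (r : ℝ → ℝ) (hr : ContDiff ℝ 1 r)
    (Fr : ℝ × ℝ → Matrix (Fin n) (Fin n) ℝ)
    (hFr : Fr = fun p => r p.1 • ((Ψ p)⁻¹ * pd1 Ψ p)) :
    ((∀ p : ℝ × ℝ,
        pd1 Fr p = (Ψ p)⁻¹ * pd1 (fun q => r q.1 • u1 q) p * Ψ p) ∧
     (∀ p : ℝ × ℝ,
        pd2 Fr p = r p.1 • ((Ψ p)⁻¹ * pd1 u2 p * Ψ p))) ∧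
    ((∀ p : ℝ × ℝ,
        pd1 (fun q => (Ψ q)⁻¹ * pd1 Ψ q) p = (Ψ p)⁻¹ * pd1 u1 p * Ψ p) ∧
     (∀ p : ℝ × ℝ,
        pd2 (fun q => (Ψ q)⁻¹ * pd1 Ψ q) p = (Ψ p)⁻¹ * pd1 u2 p * Ψ p)) :=
  surface_Fr_tangent_vectors_general u1 u2 Ψ hu1 hzcc hΨ hΨinv hlsp1 hlsp2 r hr Fr hFr
end

section
/- (Zero-curvature representation of Painlevé P1.) Let x : ℝ → ℝ be twice differentiable. For (t, λ) ∈ ℝ² define the 2×2 real matrices U¹(t,λ) := [[0, λ + 2x(t)], [1, 0]] and U²(t,λ) := [[−x'(t), 2λ² + 2λx(t) + t + 2x(t)²], [2(λ − x(t)), x'(t)]]. Then for all (t, λ) ∈ ℝ²: ∂_λU¹ − ∂_tU² + [U¹, U²] = (x''(t) − 6x(t)² − t) · e₁, where e₁ = [[1,0],[0,−1]]. In particular the zero-curvature condition ∂_λU¹ − ∂_tU² + [U¹, U²] = 0 holds identically if and only if x satisfies the first Painlevé equation x'' = 6x² + t. -/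
open Matrix

attribute [local instance] Matrix.normedAddCommGroup Matrix.normedSpace

/-- The P1 potential matrix `U¹(t,λ) = [[0, λ + 2x(t)], [1, 0]]`; the point `p = (t, λ)`. -/
noncomputable def U1P1 (x : ℝ → ℝ) (p : ℝ × ℝ) : Matrix (Fin 2) (Fin 2) ℝ :=
  !![0, p.2 + 2 * x p.1; 1, 0]

/-- The P1 potential matrix
`U²(t,λ) = [[−x'(t), 2λ² + 2λx(t) + t + 2x(t)²], [2(λ − x(t)), x'(t)]]`. -/
noncomputable def U2P1 (x : ℝ → ℝ) (p : ℝ × ℝ) : Matrix (Fin 2) (Fin 2) ℝ :=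
  !![-(deriv x p.1), 2 * p.2 ^ 2 + 2 * p.2 * x p.1 + p.1 + 2 * (x p.1) ^ 2;
     2 * (p.2 - x p.1), deriv x p.1]

def e1 : Matrix (Fin 2) (Fin 2) ℝ := !![1, 0; 0, -1]

/-!
Both partial derivatives are ordinary derivatives along the coordinate lines of `(t, λ)`, and
those of a `2 × 2` matrix are taken entrywise. With `∂_λU¹` and `∂_tU²` in hand the curvature is a
polynomial identity in `λ, x, x', x''`: every `λ`-dependent term and the off-diagonal entries cancel,
leaving `x'' − 6x² − t` times `e₁`.
-/

section MatrixCalculus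

variable {𝕜 : Type*} [NontriviallyNormedField 𝕜]

theorem Matrix.hasDerivAt_of₂₂ {a b c d : 𝕜 → 𝕜} {a' b' c' d' t : 𝕜}
    (ha : HasDerivAt a a' t) (hb : HasDerivAt b b' t) (hc : HasDerivAt c c' t)
    (hd : HasDerivAt d d' t) :
    HasDerivAt (fun t => !![a t, b t; c t, d t]) !![a', b'; c', d'] t := by
  refine hasDerivAt_pi.2 fun i => hasDerivAt_pi.2 fun j => ?_
  fin_cases i <;> fin_cases j <;> assumption

theorem Matrix.differentiableAt_of₂₂ {E : Type*} [NormedAddCommGroup E] [NormedSpace 𝕜 E]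
    {a b c d : E → 𝕜} {p : E}
    (ha : DifferentiableAt 𝕜 a p) (hb : DifferentiableAt 𝕜 b p) (hc : DifferentiableAt 𝕜 c p)
    (hd : DifferentiableAt 𝕜 d p) :
    DifferentiableAt 𝕜 (fun q => !![a q, b q; c q, d q]) p := by
  refine differentiableAt_pi.2 fun i => differentiableAt_pi.2 fun j => ?_
  fin_cases i <;> fin_cases j <;> assumption

end MatrixCalculus

section PartialDerivatives

variable {n : ℕ} {f : ℝ × ℝ → Matrix (Fin n) (Fin n) ℝ} {p : ℝ × ℝ}

theorem pd1_eq_deriv (hf : DifferentiableAt ℝ f p) :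
    pd1 f p = deriv (fun t => f (t, p.2)) p.1 :=
  ((hf.hasFDerivAt.comp_hasDerivAt p.1
    ((hasDerivAt_id p.1).prodMk (hasDerivAt_const p.1 p.2)))).deriv.symm

theorem pd2_eq_deriv (hf : DifferentiableAt ℝ f p) :
    pd2 f p = deriv (fun s => f (p.1, s)) p.2 :=
  ((hf.hasFDerivAt.comp_hasDerivAt p.2
    ((hasDerivAt_const p.2 p.1).prodMk (hasDerivAt_id p.2)))).deriv.symm

end PartialDerivatives

theorem e1_smul_eq_zero_iff {c : ℝ} : c • e1 = 0 ↔ c = 0 := by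
  refine ⟨fun h => by simpa [e1] using congrFun (congrFun h 0) 0, fun h => by rw [h, zero_smul]⟩

section PainleveOne

variable {x : ℝ → ℝ}

theorem differentiableAt_U1P1 (hx : Differentiable ℝ x) (p : ℝ × ℝ) :
    DifferentiableAt ℝ (U1P1 x) p :=
  Matrix.differentiableAt_of₂₂ (by fun_prop) (by fun_prop) (by fun_prop) (by fun_prop)

theorem differentiableAt_U2P1 (hx : Differentiable ℝ x) (hx' : Differentiable ℝ (deriv x))
    (p : ℝ × ℝ) : DifferentiableAt ℝ (U2P1 x) p :=
  Matrix.differentiableAt_of₂₂ (by fun_prop) (by fun_prop) (by fun_prop) (by fun_prop)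

theorem pd2_U1P1 (hx : Differentiable ℝ x) (p : ℝ × ℝ) : pd2 (U1P1 x) p = !![0, 1; 0, 0] := by
  rw [pd2_eq_deriv (differentiableAt_U1P1 hx p)]
  change deriv (fun s => !![0, s + 2 * x p.1; 1, 0]) p.2 = _
  exact (Matrix.hasDerivAt_of₂₂ (hasDerivAt_const _ _) ((hasDerivAt_id' _).add_const _)
    (hasDerivAt_const _ _) (hasDerivAt_const _ _)).deriv

theorem pd1_U2P1 (hx : Differentiable ℝ x) (hx' : Differentiable ℝ (deriv x)) (p : ℝ × ℝ) :
    pd1 (U2P1 x) p =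
      !![-deriv (deriv x) p.1, 2 * p.2 * deriv x p.1 + 1 + 4 * x p.1 * deriv x p.1;
        -(2 * deriv x p.1), deriv (deriv x) p.1] := by
  obtain ⟨t, s⟩ := p
  have hx₀ := (hx t).hasDerivAt
  have hx₁ := (hx' t).hasDerivAt
  rw [pd1_eq_deriv (differentiableAt_U2P1 hx hx' _)]
  change deriv (fun t => !![-deriv x t, 2 * s ^ 2 + 2 * s * x t + t + 2 * x t ^ 2;
    2 * (s - x t), deriv x t]) t = _
  refine (Matrix.hasDerivAt_of₂₂ hx₁.neg
    ((((hx₀.const_mul (2 * s)).const_add (2 * s ^ 2)).add (hasDerivAt_id' t)).add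
      ((hx₀.pow 2).const_mul 2))
    ((hx₀.const_sub s).const_mul 2) hx₁).deriv.trans ?_
  ext i j
  fin_cases i <;> fin_cases j <;> simp; ring

theorem zeroCurvature_U1P1_U2P1 (hx : Differentiable ℝ x) (hx' : Differentiable ℝ (deriv x))
    (p : ℝ × ℝ) :
    pd2 (U1P1 x) p - pd1 (U2P1 x) p + (U1P1 x p * U2P1 x p - U2P1 x p * U1P1 x p)
      = (deriv (deriv x) p.1 - 6 * (x p.1) ^ 2 - p.1) • e1 := by
  rw [pd2_U1P1 hx, pd1_U2P1 hx hx']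
  ext i j
  fin_cases i <;> fin_cases j <;> simp [U1P1, U2P1, e1] <;> ring

end PainleveOne

/-- zero-curvature representation of Painlevé P1: for twice differentiable
`x`, `∂_λU¹ − ∂_tU² + [U¹, U²] = (x'' − 6x² − t)·e₁`, and the zero-curvature condition holds
identically iff `x` satisfies the first Painlevé equation `x'' = 6x² + t`.
Here `t` is the first variable and `λ` the second, so `∂_t = pd1` and `∂_λ = pd2`. -/
theorem zcr_painleve_one (x : ℝ → ℝ)
    (hx : Differentiable ℝ x) (hx' : Differentiable ℝ (deriv x)) :
    (∀ p : ℝ × ℝ,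
      pd2 (U1P1 x) p - pd1 (U2P1 x) p
        + (U1P1 x p * U2P1 x p - U2P1 x p * U1P1 x p)
        = (deriv (deriv x) p.1 - 6 * (x p.1) ^ 2 - p.1) • e1) ∧
    ((∀ p : ℝ × ℝ,
      pd2 (U1P1 x) p - pd1 (U2P1 x) p
        + (U1P1 x p * U2P1 x p - U2P1 x p * U1P1 x p) = 0) ↔
      ∀ t : ℝ, deriv (deriv x) t = 6 * (x t) ^ 2 + t) := by
  have hcurv := zeroCurvature_U1P1_U2P1 hx hx'
  refine ⟨hcurv, ?_⟩
  simp only [hcurv, e1_smul_eq_zero_iff]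
  exact ⟨fun h t => by linarith [h (t, 0)], fun h p => by linarith [h p.1]⟩
end
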